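/- Let h and k be coprime odd positive integers and let p ≥ 1 be an integer. Then k^p T_p(h, k) + h^p T_p(k, h) = (hk)^p T_p(1, hk) − 2 E_p − 2 (hk)^p Σ (−1)^{u+v−1} E_p(u/k + v/h), where the last sum runs over all pairs of integers (u, v) with 0 ≤ u ≤ k−1, 0 ≤ v ≤ h−1 and uh + vk < hk, E_p(x) is the p-th Euler polynomial, and E_p = E_p(0) the p-th Euler number. -/

import Mathlib

open Finset

/-- The Euler numbers `E_n`, defined by `E_0 = 1` and the recurrence
`∑_{l=0}^{n} C(n,l) E_l + E_n = 0` for `n ≥ 1`. -/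
def eulerNumber : ℕ → ℚ
  | 0 => 1
  | n + 1 => -(∑ l : Fin (n + 1), ((n + 1).choose l : ℚ) * eulerNumber l) / 2

/-- The Euler polynomials `E_n(x) = ∑_{l=0}^{n} C(n,l) E_l x^{n-l}`. -/
noncomputable def eulerPoly (n : ℕ) (x : ℝ) : ℝ :=
  ∑ l ∈ Finset.range (n + 1), (n.choose l : ℝ) * (eulerNumber l : ℝ) * x ^ (n - l)

/-- The Euler function `Ē_p(x) = (-1)^⌊x⌋ E_p(x - ⌊x⌋)`. -/
noncomputable def eulerFun (p : ℕ) (x : ℝ) : ℝ := (-1 : ℝ) ^ ⌊x⌋ * eulerPoly p (x - ⌊x⌋)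

/-- The Dedekind-type DC sum `T_p(h,k) = 2 ∑_{u=1}^{k-1} (-1)^{u-1} (u/k) Ē_p(hu/k)`. -/
noncomputable def dcSum (p h k : ℕ) : ℝ :=
  2 * ∑ u ∈ Finset.Ico 1 k, (-1 : ℝ) ^ (u - 1) * ((u : ℝ) / k) * eulerFun p (h * u / k)

/-!
For odd `h`, `k` the multiplication formula `Ē_p(h t) = h^p ∑_{v<h} (-1)^v Ē_p(t + v/h)` (and its
analogue for `k`) writes `k^p T_p(h,k) + h^p T_p(k,h)` as `2 (hk)^p` times the sum of
`(-1)^(u+v+1) x Ē_p(x)` over the grid `u < k`, `v < h`, where `x = u/k + v/h = (uh + vk)/(hk)`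
lies in `[0, 2)`. Split `x = {x} + ⌊x⌋`: `⌊x⌋ Ē_p(x)` is `Ē_p(x)` minus `E_p(x)` when `x < 1`,
and both `{x} Ē_p(x)` and `Ē_p(x)` are `1`-antiperiodic. For such a `φ`, the Chinese remainder
theorem (`(u, v) ↦ uh + vk mod hk` is a bijection onto `[0, hk)`) turns `∑ (-1)^(u+v) φ(x)` into
`∑_{m<hk} (-1)^m φ(m/hk)`, which is `-T_p(1,hk)/2` for `φ = {·} Ē_p` and, by the multiplication
formula at `t = 0`, `E_p/(hk)^p` for `φ = Ē_p`.
-/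

open Function

lemma eulerNumber_recurrence {n : ℕ} (hn : n ≠ 0) :
    ∑ l ∈ range (n + 1), (n.choose l : ℝ) * eulerNumber l + eulerNumber n = 0 := by
  obtain ⟨m, rfl⟩ := Nat.exists_eq_succ_of_ne_zero hn
  rw [sum_range_succ, Nat.choose_self, eulerNumber,
    ← Fin.sum_univ_eq_sum_range (fun l => ((m + 1).choose l : ℝ) * eulerNumber l)]
  push_cast
  ring

lemma eulerPoly_zero (x : ℝ) : eulerPoly 0 x = 1 := by
  simp [eulerPoly, eulerNumber]

lemma eulerPoly_apply_zero (n : ℕ) : eulerPoly n 0 = eulerNumber n := by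
  rw [eulerPoly, sum_eq_single n (fun l hl _ => by
    rw [zero_pow (by grind), mul_zero]) (by simp)]
  simp

lemma eulerPoly_apply_one (n : ℕ) :
    eulerPoly n 1 = ∑ l ∈ range (n + 1), (n.choose l : ℝ) * eulerNumber l := by
  simp [eulerPoly]

lemma hasDerivAt_eulerPoly (n : ℕ) (x : ℝ) :
    HasDerivAt (eulerPoly (n + 1)) ((n + 1) * eulerPoly n x) x := by
  have h : HasDerivAt (eulerPoly (n + 1))
      (∑ l ∈ range (n + 2), ((n + 1).choose l : ℝ) * eulerNumber l *
        ((n + 1 - l : ℕ) * x ^ (n + 1 - l - 1))) x :=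
    HasDerivAt.fun_sum fun l _ => (hasDerivAt_pow (n + 1 - l) x).const_mul _
  convert h using 1
  rw [sum_range_succ, Nat.sub_self, Nat.cast_zero, zero_mul, mul_zero, add_zero, eulerPoly,
    mul_sum]
  refine sum_congr rfl fun l _ => ?_
  have hchoose : ((n + 1).choose l : ℝ) * (n + 1 - l : ℕ) = (n + 1) * n.choose l := by
    exact_mod_cast ((Nat.choose_mul_succ_eq n l).symm.trans (mul_comm _ _))
  rw [show n + 1 - l - 1 = n - l by omega]
  linear_combination -(eulerNumber l * x ^ (n - l) : ℝ) * hchoose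

lemma eulerPoly_add_one_add_eulerPoly (n : ℕ) (x : ℝ) :
    eulerPoly n (x + 1) + eulerPoly n x = 2 * x ^ n := by
  induction n generalizing x with
  | zero => norm_num [eulerPoly_zero]
  | succ n ih =>
    let f : ℝ → ℝ := fun y => eulerPoly (n + 1) (y + 1) + eulerPoly (n + 1) y - 2 * y ^ (n + 1)
    have hf : ∀ y, HasDerivAt f 0 y := fun y => by
      have := (((hasDerivAt_eulerPoly n (y + 1)).comp y ((hasDerivAt_id y).add_const 1)).add
        (hasDerivAt_eulerPoly n y)).sub ((hasDerivAt_pow (n + 1) y).const_mul 2)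
      refine this.congr_deriv ?_
      push_cast
      linear_combination ((n : ℝ) + 1) * ih y
    have hf0 : f 0 = 0 := by
      simp only [f, zero_add, eulerPoly_apply_one, eulerPoly_apply_zero]
      rw [zero_pow n.succ_ne_zero, mul_zero, sub_zero, eulerNumber_recurrence n.succ_ne_zero]
    have := is_const_of_deriv_eq_zero (fun z => (hf z).differentiableAt) (fun z => (hf z).deriv) x 0
    linarith [show f x = 0 from this.trans hf0]

lemma sum_range_neg_one_pow_mul_succ_add {R : Type*} [CommRing R] (a : ℕ → R) (m : ℕ) :
    ∑ j ∈ range m, (-1) ^ j * a (j + 1) + ∑ j ∈ range m, (-1) ^ j * a j = a 0 - (-1) ^ m * a m := by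
  induction m with
  | zero => simp
  | succ m ih =>
    rw [sum_range_succ, sum_range_succ]
    linear_combination ih

lemma Function.Antiperiodic.eq_zero_of_hasDerivAt_zero {f : ℝ → ℝ} {c : ℝ} (hf : Antiperiodic f c)
    (hd : ∀ x, HasDerivAt f 0 x) (x : ℝ) : f x = 0 := by
  have h := is_const_of_deriv_eq_zero (fun z => (hd z).differentiableAt) (fun z => (hd z).deriv)
    (x + c) x
  linarith [hf x]

lemma Function.Antiperiodic.eq_of_eqOn_Ico {f g : ℝ → ℝ} {c : ℝ} (hc : 0 < c)
    (hf : Antiperiodic f c) (hg : Antiperiodic g c) (hfg : Set.EqOn f g (Set.Ico 0 c)) :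
    f = g := by
  funext x
  have hx : x = (x - ⌊x / c⌋ * c) + ⌊x / c⌋ * c := by ring
  rw [hx, hf.add_int_mul_eq, hg.add_int_mul_eq,
    hfg ⟨Int.sub_floor_div_mul_nonneg x hc, Int.sub_floor_div_mul_lt x hc⟩]

lemma Function.Antiperiodic.sum_range_neg_one_pow_mul_add_div {φ : ℝ → ℝ}
    (hφ : Antiperiodic φ 1) {m : ℕ} (hm : Odd m) :
    Antiperiodic (fun t => ∑ j ∈ range m, (-1 : ℝ) ^ j * φ (t + j / m)) (m : ℝ)⁻¹ := by
  intro t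
  have hm0 : (m : ℝ) ≠ 0 := by exact_mod_cast hm.pos.ne'
  have h := sum_range_neg_one_pow_mul_succ_add (fun j => φ (t + j / m)) m
  simp only [Nat.cast_zero, zero_div, add_zero, div_self hm0, hφ t, hm.neg_one_pow] at h
  have hshift : ∀ j ∈ range m,
      (-1 : ℝ) ^ j * φ (t + (m : ℝ)⁻¹ + j / m) = (-1) ^ j * φ (t + (j + 1 : ℕ) / m) :=
    fun j _ => by push_cast; ring_nf
  dsimp only
  rw [sum_congr rfl hshift]
  linarith

lemma eulerPoly_eq_pow_mul_sum {m : ℕ} (hm : Odd m) (n : ℕ) (x : ℝ) :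
    eulerPoly n x = (m : ℝ) ^ n * ∑ j ∈ range m, (-1 : ℝ) ^ j * eulerPoly n ((x + j) / m) := by
  have hm0 : (m : ℝ) ≠ 0 := by exact_mod_cast hm.pos.ne'
  induction n generalizing x with
  | zero =>
    simp [eulerPoly_zero, neg_one_geom_sum, Nat.not_even_iff_odd.mpr hm]
  | succ n ih =>
    -- `D` is constant (its derivative is `(n + 1)` times the case `n`) and `1`-antiperiodic.
    let D : ℝ → ℝ := fun y =>
      (m : ℝ) ^ (n + 1) * ∑ j ∈ range m, (-1 : ℝ) ^ j * eulerPoly (n + 1) ((y + j) / m) -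
        eulerPoly (n + 1) y
    have hD : Antiperiodic D 1 := fun y => by
      have h := sum_range_neg_one_pow_mul_succ_add (fun j => eulerPoly (n + 1) ((y + j) / m)) m
      simp only [Nat.cast_zero, add_zero, hm.neg_one_pow] at h
      rw [show (y + m) / m = y / m + 1 by field_simp] at h
      have hshift : ∀ j ∈ range m, (-1 : ℝ) ^ j * eulerPoly (n + 1) ((y + 1 + j) / m) =
          (-1) ^ j * eulerPoly (n + 1) ((y + (j + 1 : ℕ)) / m) :=
        fun j _ => by push_cast; ring_nf
      have hpow : (m : ℝ) ^ (n + 1) * (y / m) ^ (n + 1) = y ^ (n + 1) := by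
        rw [← mul_pow, mul_div_cancel₀ y hm0]
      simp only [D]
      rw [sum_congr rfl hshift]
      linear_combination (m : ℝ) ^ (n + 1) * h
        + (m : ℝ) ^ (n + 1) * eulerPoly_add_one_add_eulerPoly (n + 1) (y / m) + 2 * hpow
        - eulerPoly_add_one_add_eulerPoly (n + 1) y
    have hD' : ∀ y, HasDerivAt D 0 y := fun y => by
      have hterm : ∀ j : ℕ, HasDerivAt (fun y : ℝ => eulerPoly (n + 1) ((y + j) / m))
          ((n + 1) * eulerPoly n ((y + j) / m) * (1 / m)) y := fun j =>
        (hasDerivAt_eulerPoly n _).comp y (((hasDerivAt_id y).add_const _).div_const _)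
      refine (((HasDerivAt.fun_sum fun j _ => (hterm j).const_mul ((-1 : ℝ) ^ j)).const_mul
        ((m : ℝ) ^ (n + 1))).sub (hasDerivAt_eulerPoly n y)).congr_deriv ?_
      rw [ih y, mul_sum, mul_sum, mul_sum, ← sum_sub_distrib]
      refine sum_eq_zero fun j _ => ?_
      field_simp
      ring
    exact sub_eq_zero.mp (hD.eq_zero_of_hasDerivAt_zero hD' x) |>.symm

lemma eulerFun_eq_eulerPoly (p : ℕ) {x : ℝ} (h0 : 0 ≤ x) (h1 : x < 1) :
    eulerFun p x = eulerPoly p x := by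
  simp [eulerFun, Int.floor_eq_zero_iff.mpr ⟨h0, h1⟩]

lemma eulerFun_antiperiodic (p : ℕ) : Antiperiodic (eulerFun p) 1 := fun x => by
  rw [eulerFun, eulerFun, Int.floor_add_one, zpow_add_one₀ (by norm_num), Int.cast_add,
    Int.cast_one, add_sub_add_right_eq_sub]
  ring

lemma eulerFun_mul_eq_pow_mul_sum (p : ℕ) {m : ℕ} (hm : Odd m) (t : ℝ) :
    eulerFun p (m * t) = (m : ℝ) ^ p * ∑ j ∈ range m, (-1 : ℝ) ^ j * eulerFun p (t + j / m) := by
  have hm0 : (0 : ℝ) < m := by exact_mod_cast hm.pos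
  -- Both sides are `1/m`-antiperiodic in `t`; on `[0, 1/m)` this is the polynomial formula.
  have hlhs := (eulerFun_antiperiodic p).const_mul hm0.ne'
  rw [mul_one] at hlhs
  have hrhs : Antiperiodic
      (fun t => (m : ℝ) ^ p * ∑ j ∈ range m, (-1 : ℝ) ^ j * eulerFun p (t + j / m)) (m : ℝ)⁻¹ :=
    fun t => by
      simpa only [mul_neg] using congrArg ((m : ℝ) ^ p * ·)
        ((eulerFun_antiperiodic p).sum_range_neg_one_pow_mul_add_div hm t)
  refine congrFun (hlhs.eq_of_eqOn_Ico (inv_pos.mpr hm0) hrhs fun s ⟨hs0, hs1⟩ => ?_) t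
  have hms : (m : ℝ) * s < 1 := by
    simpa [hm0.ne'] using mul_lt_mul_of_pos_left hs1 hm0
  rw [eulerFun_eq_eulerPoly p (by positivity) hms, eulerPoly_eq_pow_mul_sum hm]
  refine congrArg _ (sum_congr rfl fun j hj => ?_)
  have hj : (j : ℝ) + 1 ≤ m := by exact_mod_cast mem_range.mp hj
  have hsj : s + j / m < 1 := by
    rw [← sub_pos]
    field_simp
    linarith
  rw [eulerFun_eq_eulerPoly p (by positivity) hsj, add_div, mul_div_cancel_left₀ s hm0.ne']

lemma injOn_mul_add_mul_mod {h k : ℕ} (hcop : h.Coprime k) :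
    Set.InjOn (fun uv : ℕ × ℕ => (uv.1 * h + uv.2 * k) % (h * k)) ↑(range k ×ˢ range h) := by
  rintro ⟨u₁, v₁⟩ huv₁ ⟨u₂, v₂⟩ huv₂ heq
  simp only [coe_product, coe_range, Set.mem_prod, Set.mem_Iio] at huv₁ huv₂
  have heq' : u₁ * h + v₁ * k ≡ u₂ * h + v₂ * k [MOD h * k] := heq
  have hu : u₁ * h ≡ u₂ * h [MOD k] := by
    simpa [Nat.ModEq, Nat.add_mul_mod_self_right] using heq'.of_mul_left h
  have hv : v₁ * k ≡ v₂ * k [MOD h] := by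
    simpa [Nat.ModEq, Nat.add_mul_mod_self_right] using heq'.of_mul_right k
  rw [Prod.mk.injEq]
  exact ⟨(hu.cancel_right_of_coprime hcop.symm).eq_of_lt_of_lt huv₁.1 huv₂.1,
    (hv.cancel_right_of_coprime hcop).eq_of_lt_of_lt huv₁.2 huv₂.2⟩

lemma sum_product_range_mul_add_mul_mod {M : Type*} [AddCommMonoid M] {h k : ℕ} (hh : 0 < h)
    (hk : 0 < k) (hcop : h.Coprime k) (g : ℕ → M) :
    ∑ uv ∈ range k ×ˢ range h, g ((uv.1 * h + uv.2 * k) % (h * k)) = ∑ m ∈ range (h * k), g m := by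
  have himage : (range k ×ˢ range h).image (fun uv => (uv.1 * h + uv.2 * k) % (h * k)) =
      range (h * k) := by
    refine eq_of_subset_of_card_le (fun m hm => ?_) ?_
    · obtain ⟨uv, -, rfl⟩ := mem_image.mp hm
      exact mem_range.mpr (Nat.mod_lt _ (Nat.mul_pos hh hk))
    · rw [card_image_of_injOn (injOn_mul_add_mul_mod hcop), card_product, card_range, card_range,
        card_range, mul_comm]
  rw [← himage, sum_image (injOn_mul_add_mul_mod hcop)]

lemma Function.Antiperiodic.neg_one_pow_mul_div_eq_mod {φ : ℝ → ℝ} (hφ : Antiperiodic φ 1)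
    {N : ℕ} (hN : Odd N) (n : ℕ) :
    (-1 : ℝ) ^ n * φ (n / N) = (-1) ^ (n % N) * φ ((n % N : ℕ) / N) := by
  have hN0 : (N : ℝ) ≠ 0 := by exact_mod_cast hN.pos.ne'
  have hn : (n : ℝ) / N = (n % N : ℕ) / N + (n / N : ℕ) • (1 : ℝ) := by
    rw [nsmul_one]
    field_simp
    exact_mod_cast (Nat.mod_add_div n N).symm
  have hsign : (-1 : ℝ) ^ n = (-1) ^ (n % N) * (-1) ^ (n / N) := by
    conv_lhs => rw [← Nat.mod_add_div n N, pow_add, pow_mul, hN.neg_one_pow]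
  rw [hn, hφ.add_nsmul_eq, zsmul_eq_mul, hsign]
  push_cast
  rw [mul_assoc, ← mul_assoc ((-1 : ℝ) ^ (n / N)), ← mul_pow]
  norm_num

lemma Function.Antiperiodic.sum_product_range_neg_one_pow_mul {φ : ℝ → ℝ} (hφ : Antiperiodic φ 1)
    {h k : ℕ} (hh : Odd h) (hk : Odd k) (hcop : h.Coprime k) :
    ∑ uv ∈ range k ×ˢ range h, (-1 : ℝ) ^ (uv.1 + uv.2) * φ (uv.1 / k + uv.2 / h) =
      ∑ m ∈ range (h * k), (-1 : ℝ) ^ m * φ (m / (h * k)) := by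
  rw [← sum_product_range_mul_add_mul_mod hh.pos hk.pos hcop]
  refine sum_congr rfl fun uv _ => ?_
  have hsign : (-1 : ℝ) ^ (uv.1 + uv.2) = (-1) ^ (uv.1 * h + uv.2 * k) :=
    neg_one_pow_congr (by simp [Nat.even_add, Nat.even_mul, Nat.not_even_iff_odd.mpr hh,
      Nat.not_even_iff_odd.mpr hk])
  have hx : (uv.1 : ℝ) / k + uv.2 / h = ((uv.1 * h + uv.2 * k : ℕ) : ℝ) / (h * k : ℕ) := by
    have : (h : ℝ) ≠ 0 := by exact_mod_cast hh.pos.ne'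
    have : (k : ℝ) ≠ 0 := by exact_mod_cast hk.pos.ne'
    field_simp
    push_cast
    ring
  rw [hsign, hx, hφ.neg_one_pow_mul_div_eq_mod (hh.mul hk)]
  push_cast
  rfl

lemma sum_range_neg_one_pow_mul_eulerFun_div (p : ℕ) {N : ℕ} (hN : Odd N) :
    ∑ m ∈ range N, (-1 : ℝ) ^ m * eulerFun p (m / N) = eulerNumber p / (N : ℝ) ^ p := by
  have h := eulerFun_mul_eq_pow_mul_sum p hN 0
  rw [mul_zero, eulerFun_eq_eulerPoly p le_rfl one_pos, eulerPoly_apply_zero] at h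
  simp only [zero_add] at h
  rw [h, mul_div_cancel_left₀ _ (pow_ne_zero p (by exact_mod_cast hN.pos.ne'))]

lemma sum_Ico_one_eq_sum_range {M : Type*} [AddCommMonoid M] {f : ℕ → M} (hf : f 0 = 0) (n : ℕ) :
    ∑ u ∈ Ico 1 n, f u = ∑ u ∈ range n, f u :=
  sum_subset (fun u => by simp only [mem_Ico, mem_range]; omega) fun u _ hu => by
    rwa [show u = 0 by simp_all]

lemma neg_one_pow_sub_one_mul_natCast (u : ℕ) : (-1 : ℝ) ^ (u - 1) * u = -((-1) ^ u * u) := by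
  cases u with
  | zero => simp
  | succ u => rw [Nat.add_sub_cancel, pow_succ]; ring

lemma pow_mul_dcSum (p : ℕ) {h : ℕ} (hh : Odd h) (k : ℕ) :
    (k : ℝ) ^ p * dcSum p h k = 2 * ((h : ℝ) * k) ^ p *
      ∑ u ∈ range k, ∑ v ∈ range h,
        (-1 : ℝ) ^ (u + v + 1) * (u / k) * eulerFun p (u / k + v / h) := by
  rw [dcSum, sum_Ico_one_eq_sum_range (M := ℝ)]
  · simp only [mul_sum]
    refine sum_congr rfl fun u _ => ?_
    rw [mul_div_assoc, eulerFun_mul_eq_pow_mul_sum p hh]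
    simp only [mul_sum]
    refine sum_congr rfl fun v _ => ?_
    linear_combination (2 * k ^ p * h ^ p * (-1) ^ v * eulerFun p (u / k + v / h) / k : ℝ) *
      neg_one_pow_sub_one_mul_natCast u
  · simp

lemma pow_mul_dcSum_add_pow_mul_dcSum (p : ℕ) {h k : ℕ} (hh : Odd h) (hk : Odd k) :
    (k : ℝ) ^ p * dcSum p h k + (h : ℝ) ^ p * dcSum p k h = 2 * ((h : ℝ) * k) ^ p *
      ∑ uv ∈ range k ×ˢ range h, (-1 : ℝ) ^ (uv.1 + uv.2 + 1) * (uv.1 / k + uv.2 / h) *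
        eulerFun p (uv.1 / k + uv.2 / h) := by
  rw [pow_mul_dcSum p hh, pow_mul_dcSum p hk, sum_comm (s := range h), mul_comm (k : ℝ),
    ← mul_add, ← sum_add_distrib, sum_product]
  refine congrArg _ (sum_congr rfl fun u _ => ?_)
  rw [← sum_add_distrib]
  refine sum_congr rfl fun v _ => ?_
  rw [add_comm (v / h : ℝ), add_comm v u]
  ring

lemma dcSum_one_left (p N : ℕ) :
    dcSum p 1 N =
      -2 * ∑ m ∈ range N, (-1 : ℝ) ^ m * (Int.fract ((m : ℝ) / N) * eulerFun p (m / N)) := by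
  rw [dcSum, sum_Ico_one_eq_sum_range (M := ℝ), mul_sum, mul_sum]
  · refine sum_congr rfl fun m hm => ?_
    have hmN : (m : ℝ) < N := by exact_mod_cast mem_range.mp hm
    rw [Nat.cast_one, one_mul, Int.fract_eq_self.mpr
      ⟨by positivity, (div_lt_one ((Nat.cast_nonneg m).trans_lt hmN)).mpr hmN⟩]
    linear_combination (2 * eulerFun p (m / N) / N : ℝ) * neg_one_pow_sub_one_mul_natCast m
  · simp

lemma fract_mul_eulerFun_antiperiodic (p : ℕ) :
    Antiperiodic (fun y => Int.fract y * eulerFun p y) 1 := fun y => by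
  simp only [Int.fract_add_one, eulerFun_antiperiodic p y, mul_neg]

lemma mul_eulerFun_of_nonneg_of_lt_two (p : ℕ) {y : ℝ} (h0 : 0 ≤ y) (h2 : y < 2) :
    y * eulerFun p y =
      Int.fract y * eulerFun p y + eulerFun p y - if y < 1 then eulerPoly p y else 0 := by
  split_ifs with h1
  · rw [Int.fract_eq_self.mpr ⟨h0, h1⟩, eulerFun_eq_eulerPoly p h0 h1]
    ring
  · have hfloor : ⌊y⌋ = 1 := Int.floor_eq_iff.mpr ⟨by push_cast; linarith, by push_cast; linarith⟩
    rw [Int.fract, hfloor, Int.cast_one]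
    ring

lemma natCast_div_add_natCast_div_lt_one_iff {u v h k : ℕ} (hh : 0 < h) (hk : 0 < k) :
    (u : ℝ) / k + v / h < 1 ↔ u * h + v * k < h * k := by
  have hh' : (0 : ℝ) < h := by exact_mod_cast hh
  have hk' : (0 : ℝ) < k := by exact_mod_cast hk
  rw [div_add_div _ _ hk'.ne' hh'.ne', div_lt_one (by positivity), mul_comm (k : ℝ) h,
    mul_comm (k : ℝ) v]
  norm_cast

lemma sum_product_range_neg_one_pow_mul_mul_eulerFun (p : ℕ) {h k : ℕ} (hh : 0 < h)
    (hk : 0 < k) :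
    ∑ uv ∈ range k ×ˢ range h, (-1 : ℝ) ^ (uv.1 + uv.2 + 1) *
        (uv.1 / k + uv.2 / h) * eulerFun p (uv.1 / k + uv.2 / h) =
      -∑ uv ∈ range k ×ˢ range h, (-1 : ℝ) ^ (uv.1 + uv.2) *
          (Int.fract ((uv.1 : ℝ) / k + uv.2 / h) * eulerFun p (uv.1 / k + uv.2 / h)) -
        ∑ uv ∈ range k ×ˢ range h, (-1 : ℝ) ^ (uv.1 + uv.2) * eulerFun p (uv.1 / k + uv.2 / h) -
        ∑ uv ∈ (range k ×ˢ range h).filter (fun uv => uv.1 * h + uv.2 * k < h * k),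
          (-1 : ℝ) ^ (uv.1 + uv.2 + 1) * eulerPoly p (uv.1 / k + uv.2 / h) := by
  rw [sum_filter, ← sum_neg_distrib, ← sum_sub_distrib, ← sum_sub_distrib]
  refine sum_congr rfl fun uv huv => ?_
  obtain ⟨hu, hv⟩ := mem_product.mp huv
  have hu' : (uv.1 : ℝ) / k < 1 := by
    rw [div_lt_one (by exact_mod_cast hk)]; exact_mod_cast mem_range.mp hu
  have hv' : (uv.2 : ℝ) / h < 1 := by
    rw [div_lt_one (by exact_mod_cast hh)]; exact_mod_cast mem_range.mp hv
  rw [mul_assoc, mul_eulerFun_of_nonneg_of_lt_two p (by positivity) (by linarith)]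
  simp only [natCast_div_add_natCast_div_lt_one_iff hh hk]
  split_ifs <;> ring

theorem dcSum_reciprocity_aux2_general (h k p : ℕ) (hhodd : Odd h) (hkodd : Odd k)
    (hcop : Nat.Coprime h k) :
    (k : ℝ) ^ p * dcSum p h k + (h : ℝ) ^ p * dcSum p k h =
      ((h : ℝ) * k) ^ p * dcSum p 1 (h * k) - 2 * (eulerNumber p : ℝ) -
        2 * ((h : ℝ) * k) ^ p *
          ∑ uv ∈ (Finset.range k ×ˢ Finset.range h).filter
              (fun uv => uv.1 * h + uv.2 * k < h * k),
            (-1 : ℝ) ^ (uv.1 + uv.2 + 1) *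
              eulerPoly p ((uv.1 : ℝ) / k + (uv.2 : ℝ) / h) := by
  have hhk : ((h * k : ℕ) : ℝ) ^ p ≠ 0 :=
    pow_ne_zero _ (by exact_mod_cast (hhodd.mul hkodd).pos.ne')
  rw [pow_mul_dcSum_add_pow_mul_dcSum p hhodd hkodd,
    sum_product_range_neg_one_pow_mul_mul_eulerFun p hhodd.pos hkodd.pos,
    (fract_mul_eulerFun_antiperiodic p).sum_product_range_neg_one_pow_mul hhodd hkodd hcop,
    (eulerFun_antiperiodic p).sum_product_range_neg_one_pow_mul hhodd hkodd hcop, dcSum_one_left,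
    ← Nat.cast_mul, sum_range_neg_one_pow_mul_eulerFun_div p (hhodd.mul hkodd)]
  field_simp

/-- For coprime odd positive `h, k` and `p ≥ 1`,
`k^p T_p(h,k) + h^p T_p(k,h) = (hk)^p T_p(1, hk) − 2 E_p
  − 2 (hk)^p ∑_{(u,v) : 0 ≤ u ≤ k−1, 0 ≤ v ≤ h−1, uh+vk < hk} (−1)^{u+v−1} E_p(u/k + v/h)`. -/
theorem dcSum_reciprocity_aux2 (h k p : ℕ) (hh : 0 < h) (hk : 0 < k)
    (hhodd : Odd h) (hkodd : Odd k) (hcop : Nat.Coprime h k) (hp : 1 ≤ p) :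
    (k : ℝ) ^ p * dcSum p h k + (h : ℝ) ^ p * dcSum p k h =
      ((h : ℝ) * k) ^ p * dcSum p 1 (h * k) - 2 * (eulerNumber p : ℝ) -
        2 * ((h : ℝ) * k) ^ p *
          ∑ uv ∈ (Finset.range k ×ˢ Finset.range h).filter
              (fun uv => uv.1 * h + uv.2 * k < h * k),
            (-1 : ℝ) ^ (uv.1 + uv.2 + 1) *
              eulerPoly p ((uv.1 : ℝ) / k + (uv.2 : ℝ) / h) :=
  dcSum_reciprocity_aux2_general h k p hhodd hkodd hcop
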